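/- arXiv:2403.04919 — 7 statements merged into one kernel-verified Lean document; each statement's English description precedes it below -/
import Mathlib

section
/- Functional elimination of vertices commutes: for a finite DAG G and two distinct vertices X and Y, eliminating X and then Y yields the same DAG as eliminating Y and then X, where eliminating a vertex V means adding an edge from every parent of V to every child of V (among remaining vertices) and then removing V. -/
/-- Functional elimination of a vertex `X` from a digraph: add an edge from each
parent of `X` to each child of `X` (among remaining vertices), then delete `X`. -/
def elimVertex {V : Type*} (E : V → V → Prop) (X : V) : V → V → Prop :=
  fun a b => a ≠ X ∧ b ≠ X ∧ (E a b ∨ (E a X ∧ E X b))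

/-!
Eliminating `X` and then `Y` leaves an edge `a → b` exactly when `E` has a path from `a` to `b`
whose interior vertices are `X` or `Y`, each visited at most once, or the path
`a → X → Y → X → b`. The latter needs a 2-cycle `X ⇄ Y`, which acyclicity rules out, and the
remaining description is symmetric in `X` and `Y`.
-/

theorem elimVertex_elimVertex_iff {V : Type*} {E : V → V → Prop} {X Y : V} (hXY : X ≠ Y)
    (h : ¬(E X Y ∧ E Y X)) (a b : V) :
    elimVertex (elimVertex E X) Y a b ↔
      a ≠ X ∧ a ≠ Y ∧ b ≠ X ∧ b ≠ Y ∧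
        (E a b ∨ (E a X ∧ E X b) ∨ (E a Y ∧ E Y b) ∨
          (E a X ∧ E X Y ∧ E Y b) ∨ (E a Y ∧ E Y X ∧ E X b)) := by
  have hYX := hXY.symm
  simp only [elimVertex]
  tauto

theorem elimVertex_comm_general {V : Type*} (E : V → V → Prop) (X Y : V)
    (hG : ∀ v, ¬ Relation.TransGen E v v) (hXY : X ≠ Y) :
    ∀ a b, elimVertex (elimVertex E X) Y a b ↔ elimVertex (elimVertex E Y) X a b := by
  have no_two_cycle : ¬(E X Y ∧ E Y X) := fun ⟨h, h'⟩ => hG X (.tail (.single h) h')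
  intro a b
  rw [elimVertex_elimVertex_iff hXY no_two_cycle,
    elimVertex_elimVertex_iff hXY.symm (no_two_cycle ∘ And.symm)]
  tauto

/-- For a finite DAG and distinct vertices `X`, `Y`, eliminating `X`
and then `Y` yields the same DAG as eliminating `Y` and then `X`. -/
theorem elimVertex_comm {V : Type*} [Fintype V] (E : V → V → Prop) (X Y : V)
    (hG : ∀ v, ¬ Relation.TransGen E v v) (hXY : X ≠ Y) :
    ∀ a b, elimVertex (elimVertex E X) Y a b ↔ elimVertex (elimVertex E Y) X a b :=
  elimVertex_comm_general E X Y hG hXY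
end

section
/- Consequently, functionally eliminating a set W of vertices from a finite DAG G in any order yields the same DAG; the result has an edge from A to B (A, B ∉ W) if and only if there is a directed path from A to B in G all of whose internal vertices belong to W. -/
/-- Eliminating a list of vertices one at a time, in order. -/
def elimList {V : Type*} (E : V → V → Prop) (l : List V) : V → V → Prop :=
  l.foldl elimVertex E

/-!
Eliminating `X` deletes every edge at `X` and shortcuts every path `a → X → b`. Hence, by
induction on the list, `a → b` is an edge after eliminating `l` exactly when `a, b ∉ l` and
`E` has a path from `a` to `b` with all internal vertices in `l`. This description depends
only on the set of vertices of `l`, which gives the order independence.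
-/

section

open Relation

variable {V : Type*} {E : V → V → Prop} {S : Set V} {X a b c : V}

def PathThrough (E : V → V → Prop) (S : Set V) (a b : V) : Prop :=
  ∃ w, ReflTransGen (fun u v => v ∈ S ∧ E u v) a w ∧ E w b

namespace PathThrough

lemma single (h : E a b) : PathThrough E S a b :=
  ⟨a, .refl, h⟩

lemma head (hc : c ∈ S) (hac : E a c) (h : PathThrough E S c b) : PathThrough E S a b :=
  let ⟨w, hcw, hwb⟩ := h
  ⟨w, .head ⟨hc, hac⟩ hcw, hwb⟩

lemma empty_iff : PathThrough E ∅ a b ↔ E a b := by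
  refine ⟨fun ⟨w, haw, hwb⟩ => ?_, single⟩
  rcases haw.cases_head with rfl | ⟨_, ⟨hc, _⟩, _⟩
  · exact hwb
  · exact hc.elim

lemma of_elimVertex (h : PathThrough (elimVertex E X) S a b) :
    a ≠ X ∧ b ≠ X ∧ PathThrough E (insert X S) a b := by
  obtain ⟨w, haw, hX, hb, hwb⟩ := h
  have haw' : ReflTransGen (fun u v => v ∈ insert X S ∧ E u v) a w := by
    refine reflTransGen_closed (fun u v (huv : v ∈ S ∧ elimVertex E X u v) => ?_) _ _ haw
    obtain ⟨hv, _, _, huv | ⟨huX, hXv⟩⟩ := huv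
    · exact .single ⟨.inr hv, huv⟩
    · exact .tail (.single ⟨.inl rfl, huX⟩) ⟨.inr hv, hXv⟩
  have haX : a ≠ X := by
    rcases haw.cases_head with rfl | ⟨_, ⟨_, haX, _⟩, _⟩ <;> assumption
  refine ⟨haX, hb, ?_⟩
  rcases hwb with hwb | ⟨hwX, hXb⟩
  · exact ⟨w, haw', hwb⟩
  · exact ⟨X, haw'.tail ⟨.inl rfl, hwX⟩, hXb⟩

/-- The walk may pass through `X` several times: the invariant records that, once it is at
`X`, any edge `a → X` can be used to skip ahead. -/
lemma elimVertex_of_reflTransGen (hb : b ≠ X) {d w : V}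
    (hdw : ReflTransGen (fun u v => v ∈ insert X S ∧ E u v) d w) (hwb : E w b) :
    (d ≠ X → PathThrough (elimVertex E X) S d b) ∧
      (d = X → ∀ a, a ≠ X → E a X → PathThrough (elimVertex E X) S a b) := by
  induction hdw using ReflTransGen.head_induction_on with
  | refl =>
    exact ⟨fun hw => single ⟨hw, hb, .inl hwb⟩,
      fun hw a ha haX => single ⟨ha, hb, .inr ⟨haX, hw ▸ hwb⟩⟩⟩
  | @head d c hdc _ ih =>
    obtain ⟨hc, hdc⟩ := hdc
    by_cases hcX : c = X
    · subst hcX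
      exact ⟨fun hd => ih.2 rfl d hd hdc, fun _ => ih.2 rfl⟩
    · have hcS : c ∈ S := hc.resolve_left hcX
      refine ⟨fun hd => (ih.1 hcX).head hcS ⟨hd, hcX, .inl hdc⟩, ?_⟩
      rintro rfl a ha haX
      exact (ih.1 hcX).head hcS ⟨ha, hcX, .inr ⟨haX, hdc⟩⟩

lemma elimVertex_iff :
    PathThrough (elimVertex E X) S a b ↔ a ≠ X ∧ b ≠ X ∧ PathThrough E (insert X S) a b := by
  refine ⟨of_elimVertex, fun ⟨ha, hb, w, haw, hwb⟩ => ?_⟩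
  exact (elimVertex_of_reflTransGen hb haw hwb).1 ha

end PathThrough

lemma elimList_iff (l : List V) (E : V → V → Prop) (a b : V) :
    elimList E l a b ↔ a ∉ l ∧ b ∉ l ∧ PathThrough E {v | v ∈ l} a b := by
  induction l generalizing E with
  | nil => simp [elimList, PathThrough.empty_iff]
  | cons X l ih =>
    have hset : {v | v ∈ X :: l} = insert X {v | v ∈ l} := Set.ext fun _ => List.mem_cons
    change elimList (elimVertex E X) l a b ↔ _
    rw [ih, PathThrough.elimVertex_iff, hset, List.mem_cons, List.mem_cons]
    tauto

end

theorem elimList_order_independent_and_path_characterization_general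
    {V : Type*} (E : V → V → Prop)
    (W : Set V) (l₁ l₂ : List V)
    (hm₁ : ∀ v, v ∈ l₁ ↔ v ∈ W) (hm₂ : ∀ v, v ∈ l₂ ↔ v ∈ W) :
    (∀ a b, elimList E l₁ a b ↔ elimList E l₂ a b) ∧
    (∀ a b, a ∉ W → b ∉ W →
      (elimList E l₁ a b ↔
        ∃ w, Relation.ReflTransGen (fun u v => v ∈ W ∧ E u v) a w ∧ E w b)) := by
  have hW₁ : {v | v ∈ l₁} = W := Set.ext hm₁
  have hW₂ : {v | v ∈ l₂} = W := Set.ext hm₂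
  refine ⟨fun a b => ?_, fun a b ha hb => ?_⟩
  · rw [elimList_iff, elimList_iff, hm₁, hm₁, hm₂, hm₂, hW₁, hW₂]
  · rw [elimList_iff, hm₁, hm₁, hW₁]
    exact ⟨fun h => h.2.2, fun h => ⟨ha, hb, h⟩⟩

/-- Functionally eliminating a set `W` of vertices of a finite DAG in
any order yields the same DAG, and for `A, B ∉ W` the result has an edge `A → B`
iff there is a directed path from `A` to `B` in `G` all of whose internal vertices
lie in `W`. -/
theorem elimList_order_independent_and_path_characterization
    {V : Type*} [Fintype V] (E : V → V → Prop)
    (hG : ∀ v, ¬ Relation.TransGen E v v)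
    (W : Set V) (l₁ l₂ : List V)
    (h₁ : l₁.Nodup) (h₂ : l₂.Nodup)
    (hm₁ : ∀ v, v ∈ l₁ ↔ v ∈ W) (hm₂ : ∀ v, v ∈ l₂ ↔ v ∈ W) :
    (∀ a b, elimList E l₁ a b ↔ elimList E l₂ a b) ∧
    (∀ a b, a ∉ W → b ∉ W →
      (elimList E l₁ a b ↔
        ∃ w, Relation.ReflTransGen (fun u v => v ∈ W ∧ E u v) a w ∧ E w b)) :=
  elimList_order_independent_and_path_characterization_general E W l₁ l₂ hm₁ hm₂
end

section
/- Let a Bayesian network over finite variables V ∪ {X} be given by a DAG G and CPTs {f_V}, inducing the joint distribution Pr = ∏_V f_V · f_X. Let X be a functional variable, and let the network M' over V be obtained by functional elimination of X: the DAG is the functional elimination of X from G, the CPT of each child C of X is replaced by ∑_X f_X f_C, and all other CPTs are unchanged. Then the distribution Pr' induced by M' equals the marginal ∑_x Pr(x, ·) of Pr over V. -/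
/-! For fixed `v`, the `{0,1}`-valued `fX · v` summing to `1` is the indicator of a single
state `x₀`, so summing against it just evaluates at `x₀`. Both sides thus become
`∏ i, f i v x₀`, since a non-child's CPT is the same at `default` and at `x₀`. -/

open Finset

theorem exists_eq_pi_single_of_sum_eq_one {α R : Type*} [Fintype α] [DecidableEq α]
    [AddCommMonoidWithOne R] [CharZero R] {w : α → R}
    (h01 : ∀ x, w x = 0 ∨ w x = 1) (hsum : ∑ x, w x = 1) : ∃ a, w = Pi.single a 1 := by
  classical
  have hcount : ∑ x, w x = (#{x | w x = 1} : R) := by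
    rw [← sum_boole]
    refine sum_congr rfl fun x _ => ?_
    rcases h01 x with h | h <;> simp [h]
  rw [hcount, Nat.cast_eq_one, card_eq_one] at hsum
  obtain ⟨a, ha⟩ := hsum
  refine ⟨a, funext fun x => ?_⟩
  have hmem : w x = 1 ↔ x = a := by simpa using congrArg (x ∈ ·) ha
  by_cases hx : x = a
  · subst hx
    simpa using hmem.2 rfl
  · simpa [Pi.single_apply, hx] using (h01 x).resolve_right (mt hmem.1 hx)

theorem sum_mul_eq_apply_of_sum_eq_one {α R : Type*} [Fintype α] [Semiring R] [CharZero R]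
    {w : α → R} (h01 : ∀ x, w x = 0 ∨ w x = 1) (hsum : ∑ x, w x = 1) :
    ∃ a, ∀ g : α → R, ∑ x, w x * g x = g a := by
  classical
  obtain ⟨a, rfl⟩ := exists_eq_pi_single_of_sum_eq_one h01 hsum
  exact ⟨a, fun g => by simp [Pi.single_apply]⟩

theorem functional_elimination_preserves_marginal_general
    {ι TX : Type*} [Fintype ι] [DecidableEq ι] [Fintype TX] [Inhabited TX]
    {S : ι → Type*}
    (Ch : Finset ι)
    (f : (i : ι) → (∀ j, S j) → TX → ℝ)
    (fX : TX → (∀ j, S j) → ℝ)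
    (hnotchild : ∀ i, i ∉ Ch → ∀ v x x', f i v x = f i v x')
    (hfunc : ∀ x v, fX x v = 0 ∨ fX x v = 1)
    (hXsum : ∀ v, ∑ x, fX x v = 1) :
    ∀ v : ∀ j, S j,
      (∏ i, (if i ∈ Ch then ∑ x, fX x v * f i v x else f i v default))
        = ∑ x, fX x v * ∏ i, f i v x := by
  intro v
  obtain ⟨x₀, hsel⟩ := sum_mul_eq_apply_of_sum_eq_one (hfunc · v) (hXsum v)
  rw [hsel]
  refine prod_congr rfl fun i _ => ?_
  split_ifs with hi
  · exact hsel (f i v)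
  · exact hnotchild i hi v default x₀

/-- Functionally eliminating a functional variable `X` from a Bayesian
network preserves the marginal distribution over the remaining variables `V`.
Variables other than `X` are indexed by `ι` with states `S i`; `X` has states `TX`.
`Ch` is the set of children of `X`: the CPT `f i` of a non-child `i` does not depend
on the state of `X`. The eliminated network replaces the CPT of each child `C` of
`X` by `∑ x, fX x · f C`, leaving other CPTs unchanged; its joint equals the
marginal `∑ x` of the original joint. -/
theorem functional_elimination_preserves_marginal
    {ι TX : Type*} [Fintype ι] [DecidableEq ι] [Fintype TX] [Inhabited TX]
    {S : ι → Type*} [∀ i, Fintype (S i)]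
    (Ch : Finset ι)
    (f : (i : ι) → (∀ j, S j) → TX → ℝ)
    (fX : TX → (∀ j, S j) → ℝ)
    (hnotchild : ∀ i, i ∉ Ch → ∀ v x x', f i v x = f i v x')
    (hnn : ∀ i v x, 0 ≤ f i v x) (hXnn : ∀ x v, 0 ≤ fX x v)
    (hfunc : ∀ x v, fX x v = 0 ∨ fX x v = 1)
    (hXsum : ∀ v, ∑ x, fX x v = 1) :
    ∀ v : ∀ j, S j,
      (∏ i, (if i ∈ Ch then ∑ x, fX x v * f i v x else f i v default))
        = ∑ x, fX x v * ∏ i, f i v x :=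
  functional_elimination_preserves_marginal_general Ch f fX hnotchild hfunc hXsum
end

section
/- Let Pr₁ and Pr₂ be the joint distributions induced by two Bayesian networks over the same finite DAG whose CPTs agree on every variable except possibly X. Then for every instantiation p of the parents P of X, Pr₁(p) = 0 if and only if Pr₂(p) = 0; in fact Pr₁(P) = Pr₂(P) as distributions. -/
/-! Let `D` consist of `X` and its descendants. `D` is closed under children and contains no
parent of `X`, so the event "the parents of `X` take the values `v`" does not involve the
variables of `D`. Summing the joint distribution over the variables of `D`, always eliminating one
with no children left, each CPT of `D` sums to one and drops out. What remains is the product of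
the CPTs outside `D`, and these are the same in both networks. -/

attribute [local instance] Classical.propDecidable

open Finset Function

theorem Finite.wellFounded_of_irrefl_transGen {ι : Type*} [Finite ι] {E : ι → ι → Prop}
    (hacyc : ∀ i, ¬ Relation.TransGen E i i) : WellFounded E :=
  haveI : Std.Irrefl (Relation.TransGen E) := ⟨hacyc⟩
  Subrelation.wf Relation.TransGen.single (Finite.wellFounded_of_trans_of_irrefl _)

section

variable {ι : Type*} [DecidableEq ι] {S : ι → Type*} [∀ i, Fintype (S i)]

structure IsLocallyNormalized (E : ι → ι → Prop) (F : (i : ι) → (∀ j, S j) → ℝ) : Prop where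
  eq_of_eq_parents : ∀ i v w, (∀ j, E j i → v j = w j) → v i = w i → F i v = F i w
  sum_update_eq_one : ∀ i v, ∑ x : S i, F i (update v i x) = 1

variable {E : ι → ι → Prop} {F : (i : ι) → (∀ j, S j) → ℝ}

theorem IsLocallyNormalized.update_eq_of_not_parent (hF : IsLocallyNormalized E F) {i m : ι}
    (him : i ≠ m) (hmi : ¬ E m i) (u : ∀ j, S j) (x : S m) : F i (update u m x) = F i u :=
  hF.eq_of_eq_parents i _ _
    (fun j hji => update_of_ne (fun (hjm : j = m) => hmi (hjm ▸ hji)) _ _) (update_of_ne him _ _)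

variable [Fintype ι]

theorem Fintype.sum_eq_sum_ite_sum_update {M : Type*} [AddCommMonoid M] (m : ι) (c : S m)
    (φ : (∀ j, S j) → M) :
    ∑ u, φ u = ∑ u, if u m = c then ∑ x, φ (update u m x) else 0 := by
  let e := Equiv.piSplitAt m S
  have hupd : ∀ y x r, update (e.symm (y, r)) m x = e.symm (x, r) := by
    intro y x r
    refine e.injective (Prod.ext ?_ (funext fun j => ?_))
    · simp [e]
    · simp [e, j.2]
  rw [← e.symm.sum_comp, ← e.symm.sum_comp, Fintype.sum_prod_type, Fintype.sum_prod_type,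
    Finset.sum_comm]
  simp [e, hupd]

theorem Fintype.sum_mul_eq_sum_ite_of_sum_update_eq_one (m : ι) (c : S m)
    (f h : (∀ j, S j) → ℝ) (hf : ∀ u, ∑ x, f (update u m x) = 1)
    (hh : ∀ u x, h (update u m x) = h u) :
    ∑ u, f u * h u = ∑ u, if u m = c then h u else 0 := by
  rw [Fintype.sum_eq_sum_ite_sum_update m c]
  refine Fintype.sum_congr _ _ fun u => ?_
  simp only [hh, ← Finset.sum_mul, hf, one_mul]

/-- Summing out the variables of `U` does not shrink the domain of summation: their coordinates
are pinned to those of an arbitrary `v` instead. -/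
theorem IsLocallyNormalized.sum_mul_prod_eq_sum_ite_prod_compl (hF : IsLocallyNormalized E F)
    (hacyc : ∀ i, ¬ Relation.TransGen E i i) (v : ∀ j, S j) (U : Finset ι)
    (hU : ∀ i ∈ U, ∀ k, E i k → k ∈ U) (g : (∀ j, S j) → ℝ)
    (hg : ∀ j ∈ U, ∀ u x, g (update u j x) = g u) :
    ∑ u, g u * ∏ i, F i u = ∑ u, if ∀ j ∈ U, u j = v j then g u * ∏ i ∈ Uᶜ, F i u else 0 := by
  induction U using Finset.strongInduction with
  | H U ih =>
  rcases U.eq_empty_or_nonempty with rfl | hne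
  · simp
  obtain ⟨m, hmU, hmin⟩ := (Finite.wellFounded_of_irrefl_transGen hacyc).has_min _ hne
  have hU' : ∀ i ∈ U.erase m, ∀ k, E i k → k ∈ U.erase m := fun i hi k hik =>
    mem_erase.2 ⟨fun hkm => hmin i (mem_of_mem_erase hi) (hkm ▸ hik),
      hU i (mem_of_mem_erase hi) k hik⟩
  rw [ih _ (erase_ssubset hmU) hU' fun j hj => hg j (mem_of_mem_erase hj)]
  set h : (∀ j, S j) → ℝ := fun u =>
    if ∀ j ∈ U.erase m, u j = v j then g u * ∏ i ∈ Uᶜ, F i u else 0 with h_def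
  have hh : ∀ u x, h (update u m x) = h u := fun u x => by
    have hpin : (∀ j ∈ U.erase m, update u m x j = v j) ↔ ∀ j ∈ U.erase m, u j = v j :=
      forall₂_congr fun j hj => by rw [update_of_ne (ne_of_mem_erase hj)]
    have hprod : ∀ i ∈ Uᶜ, F i (update u m x) = F i u := fun i hi =>
      hF.update_eq_of_not_parent (fun (him : i = m) => mem_compl.1 hi (him ▸ hmU))
        (fun hmi => mem_compl.1 hi (hU m hmU i hmi)) u x
    simp only [h_def, hpin, hg m hmU, prod_congr rfl hprod]
  have hcond : ∀ u : ∀ j, S j,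
      (∀ j ∈ U, u j = v j) ↔ u m = v m ∧ ∀ j ∈ U.erase m, u j = v j := by
    intro u
    conv_lhs => rw [← insert_erase hmU]
    exact forall_mem_insert _ _ _
  calc ∑ u, (if ∀ j ∈ U.erase m, u j = v j then g u * ∏ i ∈ (U.erase m)ᶜ, F i u else 0)
      = ∑ u, F m u * h u := Fintype.sum_congr _ _ fun u => by
        rw [h_def, compl_erase, prod_insert (notMem_compl.2 hmU), mul_ite, mul_zero,
          mul_left_comm]
    _ = ∑ u, if u m = v m then h u else 0 :=
        Fintype.sum_mul_eq_sum_ite_of_sum_update_eq_one m _ _ _ (hF.sum_update_eq_one m) hh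
    _ = _ := Fintype.sum_congr _ _ fun u => by simp only [h_def, hcond, ite_and]

theorem IsLocallyNormalized.sum_mul_prod_eq_of_eqOn_compl {F₁ F₂ : (i : ι) → (∀ j, S j) → ℝ}
    (hF₁ : IsLocallyNormalized E F₁) (hF₂ : IsLocallyNormalized E F₂)
    (hacyc : ∀ i, ¬ Relation.TransGen E i i) (U : Finset ι)
    (hU : ∀ i ∈ U, ∀ k, E i k → k ∈ U) (hF : ∀ i ∉ U, F₁ i = F₂ i) (g : (∀ j, S j) → ℝ)
    (hg : ∀ j ∈ U, ∀ u x, g (update u j x) = g u) :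
    ∑ u, g u * ∏ i, F₁ i u = ∑ u, g u * ∏ i, F₂ i u := by
  rcases isEmpty_or_nonempty (∀ j, S j) with _ | ⟨⟨v⟩⟩
  · simp only [Fintype.sum_empty]
  rw [hF₁.sum_mul_prod_eq_sum_ite_prod_compl hacyc v U hU g hg,
    hF₂.sum_mul_prod_eq_sum_ite_prod_compl hacyc v U hU g hg]
  refine Fintype.sum_congr _ _ fun u => ?_
  rw [prod_congr rfl fun i hi => by rw [hF i (mem_compl.1 hi)]]

end

theorem replace_cpt_preserves_parent_marginal_general
    {ι : Type*} [Fintype ι] [DecidableEq ι]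
    {S : ι → Type*} [∀ i, Fintype (S i)] [∀ i, DecidableEq (S i)]
    (E : ι → ι → Prop)
    (hacyc : ∀ i, ¬ Relation.TransGen E i i)
    (X : ι)
    (F₁ F₂ : (i : ι) → (∀ j, S j) → ℝ)
    (hloc₁ : ∀ i v w, (∀ j, E j i → v j = w j) → v i = w i → F₁ i v = F₁ i w)
    (hloc₂ : ∀ i v w, (∀ j, E j i → v j = w j) → v i = w i → F₂ i v = F₂ i w)
    (hsum₁ : ∀ i v, ∑ x : S i, F₁ i (Function.update v i x) = 1)
    (hsum₂ : ∀ i v, ∑ x : S i, F₂ i (Function.update v i x) = 1)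
    (hagree : ∀ i, i ≠ X → F₁ i = F₂ i) :
    ∀ v : ∀ j, S j,
      ((∑ u : ∀ j, S j, if (∀ j, E j X → u j = v j) then ∏ i, F₁ i u else 0)
        = ∑ u : ∀ j, S j, if (∀ j, E j X → u j = v j) then ∏ i, F₂ i u else 0) ∧
      ((∑ u : ∀ j, S j, if (∀ j, E j X → u j = v j) then ∏ i, F₁ i u else 0) = 0 ↔
       (∑ u : ∀ j, S j, if (∀ j, E j X → u j = v j) then ∏ i, F₂ i u else 0) = 0) := by
  intro v
  set D := univ.filter (Relation.ReflTransGen E X)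
  have hD : ∀ i ∈ D, ∀ k, E i k → k ∈ D := fun i hi k hik =>
    mem_filter.2 ⟨mem_univ k, (mem_filter.1 hi).2.tail hik⟩
  have hXD : X ∈ D := mem_filter.2 ⟨mem_univ X, .refl⟩
  have hparD : ∀ j, E j X → j ∉ D := fun j hjX hj =>
    hacyc j (Relation.TransGen.head' hjX (mem_filter.1 hj).2)
  have key := IsLocallyNormalized.sum_mul_prod_eq_of_eqOn_compl ⟨hloc₁, hsum₁⟩ ⟨hloc₂, hsum₂⟩
    hacyc D hD (fun i hi => hagree i fun hiX => hi (hiX ▸ hXD))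
    (fun u => if ∀ j, E j X → u j = v j then 1 else 0) fun j hj u x => by
      have hpar : ∀ k, E k X → update u j x k = u k := fun k hk =>
        update_of_ne (fun (hkj : k = j) => hparD k hk (hkj ▸ hj)) x u
      simp +contextual only [hpar]
  simp only [boole_mul] at key
  exact ⟨key, by rw [key]⟩

/-- If two Bayesian networks on the same finite DAG (edge relation `E`,
`E j i` meaning `j` is a parent of `i`) have CPTs agreeing on every variable except
possibly `X`, then the induced joint distributions agree on the marginal over the
parents `P` of `X`; in particular `Pr₁(p) = 0 ↔ Pr₂(p) = 0`. -/
theorem replace_cpt_preserves_parent_marginal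
    {ι : Type*} [Fintype ι] [DecidableEq ι]
    {S : ι → Type*} [∀ i, Fintype (S i)] [∀ i, DecidableEq (S i)]
    (E : ι → ι → Prop)
    (hacyc : ∀ i, ¬ Relation.TransGen E i i)
    (X : ι)
    (F₁ F₂ : (i : ι) → (∀ j, S j) → ℝ)
    (hloc₁ : ∀ i v w, (∀ j, E j i → v j = w j) → v i = w i → F₁ i v = F₁ i w)
    (hloc₂ : ∀ i v w, (∀ j, E j i → v j = w j) → v i = w i → F₂ i v = F₂ i w)
    (hnn₁ : ∀ i v, 0 ≤ F₁ i v) (hnn₂ : ∀ i v, 0 ≤ F₂ i v)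
    (hsum₁ : ∀ i v, ∑ x : S i, F₁ i (Function.update v i x) = 1)
    (hsum₂ : ∀ i v, ∑ x : S i, F₂ i (Function.update v i x) = 1)
    (hagree : ∀ i, i ≠ X → F₁ i = F₂ i) :
    ∀ v : ∀ j, S j,
      ((∑ u : ∀ j, S j, if (∀ j, E j X → u j = v j) then ∏ i, F₁ i u else 0)
        = ∑ u : ∀ j, S j, if (∀ j, E j X → u j = v j) then ∏ i, F₂ i u else 0) ∧
      ((∑ u : ∀ j, S j, if (∀ j, E j X → u j = v j) then ∏ i, F₁ i u else 0) = 0 ↔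
       (∑ u : ∀ j, S j, if (∀ j, E j X → u j = v j) then ∏ i, F₂ i u else 0) = 0) :=
  replace_cpt_preserves_parent_marginal_general E hacyc X F₁ F₂ hloc₁ hloc₂ hsum₁ hsum₂ hagree
end

section
/- Let G be a finite DAG with functional vertices W, and let Z* be the functional closure of a set Z (least superset of Z containing every W-vertex whose parents lie in it). Then in any Bayesian network on G in which each vertex of W has a {0,1}-valued CPT, every vertex V ∈ Z* is functionally determined by Z under the induced distribution Pr: for every instantiation z of Z with Pr(z) > 0 there is a unique state v of V with Pr(v | z) = 1. -/
/-!
Fix two joint assignments of positive probability that agree on `Z`; the set of vertices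
on which they agree contains `Z` and is closed under the functional-closure rule. Indeed,
if they agree on the parents of `w ∈ W`, locality of the CPT of `w` shows that both values
at `w` have nonzero probability given the same parent state, and a {0,1}-valued CPT allows
only one such value. So all positive-probability completions of `z` share their value at
`T ∈ Z*`, which is therefore the unique state carrying all of `Pr(z)`.
-/

attribute [local instance] Classical.propDecidable

/-- The functional closure of `Z`: the least superset of `Z` containing every
vertex of `W` all of whose parents lie in the set. -/
def fclosure {V : Type*} (E : V → V → Prop) (W : Set V) (Z : Set V) : Set V :=
  ⋂₀ {C : Set V | Z ⊆ C ∧ ∀ w ∈ W, (∀ p, E p w → p ∈ C) → w ∈ C}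

theorem fclosure_subset {V : Type*} {E : V → V → Prop} {W Z C : Set V} (hZ : Z ⊆ C)
    (hC : ∀ w ∈ W, (∀ p, E p w → p ∈ C) → w ∈ C) : fclosure E W Z ⊆ C :=
  Set.sInter_subset_of_mem ⟨hZ, hC⟩

theorem eq_of_ne_zero_of_sum_eq_one {α : Type*} [Fintype α] {f : α → ℝ}
    (h01 : ∀ x, f x = 0 ∨ f x = 1) (hsum : ∑ x, f x = 1) {x y : α}
    (hx : f x ≠ 0) (hy : f y ≠ 0) : x = y := by
  by_contra hne
  have hx1 : f x = 1 := (h01 x).resolve_left hx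
  have hy1 : f y = 1 := (h01 y).resolve_left hy
  have hle : f x + f y ≤ ∑ x, f x := by
    rw [← Finset.sum_pair hne]
    exact Finset.sum_le_sum_of_subset_of_nonneg (Finset.subset_univ _)
      fun z _ _ => by rcases h01 z with h | h <;> simp [h]
  linarith

theorem sum_ite_and_eq_ite_of_determined {α β M : Type*} [Fintype α] [AddCommMonoid M]
    [DecidableEq β] {P : α → Prop} [DecidablePred P] (p : α → M) (g : α → β) (x : β)
    (hdet : ∀ a, P a → p a ≠ 0 → g a = x) (y : β) :
    ∑ a, (if P a ∧ g a = y then p a else 0) =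
      if y = x then ∑ a, (if P a then p a else 0) else 0 := by
  split_ifs with hyx
  · subst hyx
    refine Finset.sum_congr rfl fun a _ => ?_
    by_cases hPa : P a
    · by_cases hpa : p a = 0
      · simp [hpa]
      · simp [hPa, hdet a hPa hpa]
    · simp [hPa]
  · refine Finset.sum_eq_zero fun a _ => ?_
    by_cases hpa : p a = 0
    · simp [hpa]
    · exact if_neg fun ⟨hPa, hga⟩ => hyx (hga ▸ hdet a hPa hpa)

section BayesianNetwork

variable {ι : Type*} {S : ι → Type*} {E : ι → ι → Prop}

theorem eq_at_of_parents_eq [DecidableEq ι] {w : ι} [Fintype (S w)] {f : (∀ j, S j) → ℝ}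
    (hw : ¬ E w w) (hloc : ∀ v v', (∀ j, E j w → v j = v' j) → v w = v' w → f v = f v')
    (h01 : ∀ v, f v = 0 ∨ f v = 1) {u u' : ∀ j, S j}
    (hsum : ∑ x : S w, f (Function.update u' w x) = 1)
    (hu : f u ≠ 0) (hu' : f u' ≠ 0) (hpar : ∀ p, E p w → u p = u' p) : u w = u' w := by
  have hswap : f u = f (Function.update u' w (u w)) := by
    refine hloc _ _ (fun j hj => ?_) (Function.update_self ..).symm
    have hjw : j ≠ w := fun h => hw (h ▸ hj)
    rw [Function.update_of_ne hjw, hpar j hj]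
  refine eq_of_ne_zero_of_sum_eq_one (fun x => h01 _) hsum (hswap ▸ hu) ?_
  rwa [Function.update_eq_self]

theorem eq_on_fclosure_of_prod_ne_zero [Fintype ι] [DecidableEq ι] [∀ i, Fintype (S i)]
    {F : (i : ι) → (∀ j, S j) → ℝ} (hacyc : ∀ i, ¬ Relation.TransGen E i i)
    (hloc : ∀ i v w, (∀ j, E j i → v j = w j) → v i = w i → F i v = F i w)
    (hsum : ∀ i v, ∑ x : S i, F i (Function.update v i x) = 1)
    {W : Set ι} (hWfunc : ∀ w ∈ W, ∀ v, F w v = 0 ∨ F w v = 1) {Z : Set ι}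
    {u u' : ∀ j, S j} (hu : ∏ i, F i u ≠ 0) (hu' : ∏ i, F i u' ≠ 0)
    (hZ : ∀ j ∈ Z, u j = u' j) : ∀ T ∈ fclosure E W Z, u T = u' T :=
  fclosure_subset (C := {i | u i = u' i}) hZ fun w hw hpar =>
    eq_at_of_parents_eq (fun h => hacyc w (.single h)) (hloc w) (hWfunc w hw) (hsum w u')
      (Finset.prod_ne_zero_iff.mp hu w (Finset.mem_univ w))
      (Finset.prod_ne_zero_iff.mp hu' w (Finset.mem_univ w)) hpar

end BayesianNetwork

theorem fclosure_functionally_determined_general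
    {ι : Type*} [Fintype ι] [DecidableEq ι]
    {S : ι → Type*} [∀ i, Fintype (S i)] [∀ i, DecidableEq (S i)]
    (E : ι → ι → Prop)
    (hacyc : ∀ i, ¬ Relation.TransGen E i i)
    (F : (i : ι) → (∀ j, S j) → ℝ)
    (hloc : ∀ i v w, (∀ j, E j i → v j = w j) → v i = w i → F i v = F i w)
    (hsum : ∀ i v, ∑ x : S i, F i (Function.update v i x) = 1)
    (W : Set ι)
    (hWfunc : ∀ w ∈ W, ∀ v, F w v = 0 ∨ F w v = 1)
    (Z : Finset ι) :
    ∀ T ∈ fclosure E W (↑Z : Set ι),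
    ∀ v : ∀ j, S j,
      0 < (∑ u : ∀ j, S j, if (∀ j ∈ Z, u j = v j) then ∏ i, F i u else 0) →
      ∃! x : S T,
        (∑ u : ∀ j, S j, if ((∀ j ∈ Z, u j = v j) ∧ u T = x) then ∏ i, F i u else 0)
          = ∑ u : ∀ j, S j, if (∀ j ∈ Z, u j = v j) then ∏ i, F i u else 0 := by
  intro T hT v hpos
  obtain ⟨u₀, -, hu₀⟩ := Finset.exists_ne_zero_of_sum_ne_zero hpos.ne'
  obtain ⟨hu₀z, hu₀⟩ := ite_ne_right_iff.mp hu₀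
  have hdet : ∀ u : ∀ j, S j, (∀ j ∈ Z, u j = v j) → ∏ i, F i u ≠ 0 → u T = u₀ T :=
    fun u huz hu => eq_on_fclosure_of_prod_ne_zero hacyc hloc hsum hWfunc hu hu₀
      (fun j hj => (huz j hj).trans (hu₀z j hj).symm) T hT
  have hsplit := sum_ite_and_eq_ite_of_determined (fun u => ∏ i, F i u) (· T) (u₀ T) hdet
  refine ⟨u₀ T, (hsplit _).trans (if_pos rfl), fun y hy => ?_⟩
  by_contra hyx
  exact hpos.ne ((if_neg hyx).symm.trans ((hsplit y).symm.trans hy))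

/-- In a Bayesian network on a finite DAG in which every vertex of `W`
has a {0,1}-valued CPT, every vertex `T` in the functional closure `Z*` of `Z` is
functionally determined by `Z` under the induced distribution: for every
instantiation `z` of `Z` with `Pr(z) > 0` there is a unique state `x` of `T` with
`Pr(x | z) = 1` (equivalently `Pr(x, z) = Pr(z)`). -/
theorem fclosure_functionally_determined
    {ι : Type*} [Fintype ι] [DecidableEq ι]
    {S : ι → Type*} [∀ i, Fintype (S i)] [∀ i, DecidableEq (S i)]
    (E : ι → ι → Prop)
    (hacyc : ∀ i, ¬ Relation.TransGen E i i)
    (F : (i : ι) → (∀ j, S j) → ℝ)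
    (hloc : ∀ i v w, (∀ j, E j i → v j = w j) → v i = w i → F i v = F i w)
    (hnn : ∀ i v, 0 ≤ F i v)
    (hsum : ∀ i v, ∑ x : S i, F i (Function.update v i x) = 1)
    (W : Set ι)
    (hWfunc : ∀ w ∈ W, ∀ v, F w v = 0 ∨ F w v = 1)
    (Z : Finset ι) :
    ∀ T ∈ fclosure E W (↑Z : Set ι),
    ∀ v : ∀ j, S j,
      0 < (∑ u : ∀ j, S j, if (∀ j ∈ Z, u j = v j) then ∏ i, F i u else 0) →
      ∃! x : S T,
        (∑ u : ∀ j, S j, if ((∀ j ∈ Z, u j = v j) ∧ u T = x) then ∏ i, F i u else 0)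
          = ∑ u : ∀ j, S j, if (∀ j ∈ Z, u j = v j) then ∏ i, F i u else 0 :=
  fclosure_functionally_determined_general E hacyc F hloc hsum W hWfunc Z
end

section
/- Let M = (G, F) be a Bayesian network, x a treatment instantiation of variables 𝐗, and M_x the mutilated network (remove edges into 𝐗 and set each X ∈ 𝐗 to the point-mass CPT on its value in x). Let T ∉ 𝐗 be a functional variable. Then mutilation and functional elimination of T commute: functionally eliminating T from M_x yields the mutilated network (with respect to x) of the network obtained by functionally eliminating T from M. -/
attribute [local instance] Classical.propDecidable

section
variable {ι : Type*} [Fintype ι] [DecidableEq ι]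
  {S : ι → Type*} [∀ i, Fintype (S i)] [∀ i, DecidableEq (S i)]

/-- Functional elimination of a vertex `T` from the DAG: connect every parent of
`T` to every child of `T` and delete `T`. -/
def elimE (E : ι → ι → Prop) (T : ι) : ι → ι → Prop :=
  fun a b => a ≠ T ∧ b ≠ T ∧ (E a b ∨ (E a T ∧ E T b))

/-- Functional elimination of `T` on CPTs: the CPT of each child `C` of `T`
(w.r.t. the edge relation `E`) is replaced by `∑ t, f_T · f_C`; other CPTs are
unchanged. -/
noncomputable def elimF (E : ι → ι → Prop) (F : (i : ι) → (∀ j, S j) → ℝ) (T : ι) :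
    (i : ι) → (∀ j, S j) → ℝ :=
  fun i v =>
    if E T i then
      ∑ t : S T, F T (Function.update v T t) * F i (Function.update v T t)
    else F i v

/-- Mutilated edge relation w.r.t. the intervention `do(Xvars)`: delete all edges into
variables of `Xvars`. -/
def mutE (E : ι → ι → Prop) (Xvars : Set ι) : ι → ι → Prop :=
  fun a b => E a b ∧ b ∉ Xvars

/-- Mutilated CPTs w.r.t. `do(Xvars = xs)`: each `X ∈ Xvars` gets the point-mass CPT on
its value in `xs`; other CPTs are unchanged. -/
noncomputable def mutF (F : (i : ι) → (∀ j, S j) → ℝ) (Xvars : Set ι) (xs : ∀ i, S i) :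
    (i : ι) → (∀ j, S j) → ℝ :=
  fun i v => if i ∈ Xvars then (if v i = xs i then 1 else 0) else F i v

end

theorem elimE_mutE {ι : Type*} {E : ι → ι → Prop} {X : Set ι} {T : ι} (hT : T ∉ X)
    (a b : ι) : elimE (mutE E X) T a b ↔ mutE (elimE E T) X a b := by
  constructor
  · rintro ⟨ha, hb, ⟨hab, hbX⟩ | ⟨⟨haT, -⟩, hTb, hbX⟩⟩
    exacts [⟨⟨ha, hb, .inl hab⟩, hbX⟩, ⟨⟨ha, hb, .inr ⟨haT, hTb⟩⟩, hbX⟩]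
  · rintro ⟨⟨ha, hb, hab | ⟨haT, hTb⟩⟩, hbX⟩
    exacts [⟨ha, hb, .inl ⟨hab, hbX⟩⟩, ⟨ha, hb, .inr ⟨⟨haT, hT⟩, ⟨hTb, hbX⟩⟩⟩]

-- `T ∉ X` keeps the CPT of `T` itself intact inside the sum `∑ t, f_T · f_C`.
theorem elimF_mutF {ι : Type*} [DecidableEq ι] {S : ι → Type*} [∀ i, Fintype (S i)]
    [∀ i, DecidableEq (S i)] {E : ι → ι → Prop} {F : (i : ι) → (∀ j, S j) → ℝ} {X : Set ι}
    {xs : ∀ i, S i} {T : ι} (hT : T ∉ X) (i : ι) (v : ∀ j, S j) :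
    elimF (mutE E X) (mutF F X xs) T i v = mutF (elimF E F T) X xs i v := by
  by_cases hi : i ∈ X
  · have hTi : ¬ mutE E X T i := fun h => h.2 hi
    simp only [elimF, mutF, if_neg hTi, if_pos hi]
  · simp only [elimF, mutE, mutF, hi, hT, not_false_eq_true, and_true, if_false]

section
variable {ι : Type*} [Fintype ι] [DecidableEq ι]
  {S : ι → Type*} [∀ i, Fintype (S i)] [∀ i, DecidableEq (S i)]

theorem mutilation_elimination_comm_general
    (E : ι → ι → Prop)
    (F : (i : ι) → (∀ j, S j) → ℝ)
    (Xvars : Set ι) (xs : ∀ i, S i) (T : ι) (hT : T ∉ Xvars) :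
    (∀ a b, elimE (mutE E Xvars) T a b ↔ mutE (elimE E T) Xvars a b) ∧
    (∀ i v, elimF (mutE E Xvars) (mutF F Xvars xs) T i v = mutF (elimF E F T) Xvars xs i v) :=
  ⟨elimE_mutE hT, elimF_mutF hT⟩

/-- For a functional variable `T ∉ Xvars`, mutilation w.r.t. `do(Xvars = xs)`
and functional elimination of `T` commute, both on the DAG and on the CPTs:
functionally eliminating `T` from the mutilated network yields the mutilated
version of the network obtained by functionally eliminating `T`. -/
theorem mutilation_elimination_comm
    (E : ι → ι → Prop) (hacyc : ∀ i, ¬ Relation.TransGen E i i)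
    (F : (i : ι) → (∀ j, S j) → ℝ)
    (hloc : ∀ i v w, (∀ j, E j i → v j = w j) → v i = w i → F i v = F i w)
    (hnn : ∀ i v, 0 ≤ F i v)
    (hsum : ∀ i v, ∑ x : S i, F i (Function.update v i x) = 1)
    (Xvars : Set ι) (xs : ∀ i, S i) (T : ι) (hT : T ∉ Xvars)
    (hfunc : ∀ v, F T v = 0 ∨ F T v = 1) :
    (∀ a b, elimE (mutE E Xvars) T a b ↔ mutE (elimE E T) Xvars a b) ∧
    (∀ i v, elimF (mutE E Xvars) (mutF F Xvars xs) T i v = mutF (elimF E F T) Xvars xs i v) :=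
  mutilation_elimination_comm_general E F Xvars xs T hT

end
end

section
/- Let M be a Bayesian network over variables U with observed subset V and let W ⊆ U \ 𝐗 be functional variables, so that W ∩ 𝐗 = ∅. Let M' be the network obtained by functionally eliminating all of W from M. Then for every treatment do(x) on 𝐗 ⊆ U \ W, the interventional distributions agree on the remaining variables: Pr^{M'}_x(S) = ∑_W Pr^M_x(S, W) for S ⊆ U \ W; in particular Pr^{M'}_x is the marginal of Pr^M_x over U \ W. -/
attribute [local instance] Classical.propDecidable

section
variable {ι : Type*} [Fintype ι] [DecidableEq ι]
  {S : ι → Type*} [∀ i, Fintype (S i)] [∀ i, DecidableEq (S i)]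

/-- Functional elimination of one variable from a network (DAG together with CPTs). -/
noncomputable def elimNet
    (N : (ι → ι → Prop) × ((i : ι) → (∀ j, S j) → ℝ)) (T : ι) :
    (ι → ι → Prop) × ((i : ι) → (∀ j, S j) → ℝ) :=
  (elimE N.1 T, elimF N.1 N.2 T)

/-- Successive functional elimination of a list of variables. -/
noncomputable def elimNetList
    (N : (ι → ι → Prop) × ((i : ι) → (∀ j, S j) → ℝ)) (l : List ι) :
    (ι → ι → Prop) × ((i : ι) → (∀ j, S j) → ℝ) :=
  l.foldl elimNet N

lemma exists_point (F : (i : ι) → (∀ j, S j) → ℝ) (T : ι)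
    (hfunc : ∀ v, F T v = 0 ∨ F T v = 1)
    (hsum : ∀ v, ∑ t : S T, F T (Function.update v T t) = 1) (v : ∀ j, S j) :
    ∃ t₀ : S T, F T (Function.update v T t₀) = 1 ∧
      ∀ t, t ≠ t₀ → F T (Function.update v T t) = 0 := by
  set f : S T → ℝ := fun t => F T (Function.update v T t) with hf
  have hval : ∀ t, f t = if f t = 1 then 1 else 0 := by
    intro t
    rcases hfunc (Function.update v T t) with h | h
    · simp only [f, h]; norm_num
    · simp [f, h]
  have h1 : ((Finset.univ.filter fun t => f t = 1).card : ℝ) = 1 := by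
    calc ((Finset.univ.filter fun t => f t = 1).card : ℝ)
        = ∑ t, if f t = 1 then (1:ℝ) else 0 := by rw [Finset.sum_boole]
      _ = ∑ t, f t := Finset.sum_congr rfl (fun t _ => (hval t).symm)
      _ = 1 := hsum v
  have h2 : (Finset.univ.filter fun t => f t = 1).card = 1 := by exact_mod_cast h1
  obtain ⟨t₀, ht₀⟩ := Finset.card_eq_one.mp h2
  have hmem : ∀ t, f t = 1 ↔ t = t₀ := by
    intro t
    have := Finset.ext_iff.mp ht₀ t
    simpa using this
  refine ⟨t₀, (hmem t₀).mpr rfl, fun t ht => ?_⟩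
  rcases hfunc (Function.update v T t) with h | h
  · exact h
  · exact absurd ((hmem t).mp h) ht

lemma elimF_eq_child (E : ι → ι → Prop) (F : (i : ι) → (∀ j, S j) → ℝ) (T i : ι)
    (hTi : E T i) (v : ∀ j, S j) (t₀ : S T)
    (h1 : F T (Function.update v T t₀) = 1)
    (h0 : ∀ t, t ≠ t₀ → F T (Function.update v T t) = 0) :
    elimF E F T i v = F i (Function.update v T t₀) := by
  unfold elimF
  rw [if_pos hTi, Finset.sum_eq_single t₀]
  · rw [h1, one_mul]
  · intro b _ hb; rw [h0 b hb, zero_mul]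
  · intro h; exact absurd (Finset.mem_univ t₀) h

lemma elim_acyc (E : ι → ι → Prop) (T : ι) (h : ∀ i, ¬ Relation.TransGen E i i) :
    ∀ i, ¬ Relation.TransGen (elimE E T) i i := by
  intro i hc
  apply h i
  have hsub : ∀ a b, elimE E T a b → Relation.TransGen E a b := by
    rintro a b ⟨-, -, hab | ⟨ha1, ha2⟩⟩
    · exact Relation.TransGen.single hab
    · exact Relation.TransGen.tail (Relation.TransGen.single ha1) ha2
  have := Relation.TransGen.mono hsub i i hc
  rwa [Relation.transGen_idem] at this

lemma elimF_loc (E : ι → ι → Prop) (F : (i : ι) → (∀ j, S j) → ℝ) (T : ι)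
    (hlocT : ∀ v w, (∀ j, E j T → v j = w j) → v T = w T → F T v = F T w)
    (i : ι) (hiT : i ≠ T)
    (hloci : ∀ v w, (∀ j, E j i → v j = w j) → v i = w i → F i v = F i w) :
    ∀ v w, (∀ j, elimE E T j i → v j = w j) → v i = w i →
      elimF E F T i v = elimF E F T i w := by
  intro v w hpar hii
  unfold elimF
  by_cases hTi : E T i
  · rw [if_pos hTi, if_pos hTi]
    apply Finset.sum_congr rfl
    intro t _
    have hT : F T (Function.update v T t) = F T (Function.update w T t) := by
      apply hlocT
      · intro j hj
        by_cases hjT : j = T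
        · subst hjT; simp
        · rw [Function.update_of_ne hjT, Function.update_of_ne hjT]
          exact hpar j ⟨hjT, hiT, Or.inr ⟨hj, hTi⟩⟩
      · simp
    have hC : F i (Function.update v T t) = F i (Function.update w T t) := by
      apply hloci
      · intro j hj
        by_cases hjT : j = T
        · subst hjT; simp
        · rw [Function.update_of_ne hjT, Function.update_of_ne hjT]
          exact hpar j ⟨hjT, hiT, Or.inl hj⟩
      · rw [Function.update_of_ne hiT, Function.update_of_ne hiT]; exact hii
    rw [hT, hC]
  · rw [if_neg hTi, if_neg hTi]
    apply hloci _ _ _ hii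
    intro j hj
    have hjT : j ≠ T := fun h => hTi (h ▸ hj)
    exact hpar j ⟨hjT, hiT, Or.inl hj⟩

lemma elimF_sum (E : ι → ι → Prop) (F : (i : ι) → (∀ j, S j) → ℝ) (T : ι)
    (hfuncT : ∀ v, F T v = 0 ∨ F T v = 1)
    (hsumT : ∀ v, ∑ t : S T, F T (Function.update v T t) = 1)
    (hlocT : ∀ v w, (∀ j, E j T → v j = w j) → v T = w T → F T v = F T w)
    (i : ι) (hiT : i ≠ T) (hnEiT : E T i → ¬ E i T)
    (hsumi : ∀ v, ∑ x : S i, F i (Function.update v i x) = 1) :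
    ∀ v, ∑ x : S i, elimF E F T i (Function.update v i x) = 1 := by
  intro v
  by_cases hTi : E T i
  · obtain ⟨t₀, h1, h0⟩ := exists_point F T hfuncT hsumT v
    have hbase : ∀ (x : S i) (t : S T),
        F T (Function.update (Function.update v i x) T t) = F T (Function.update v T t) := by
      intro x t
      apply hlocT
      · intro j hj
        have hji : j ≠ i := fun h => (hnEiT hTi) (h ▸ hj)
        by_cases hjT : j = T
        · subst hjT; simp
        · rw [Function.update_of_ne hjT, Function.update_of_ne hjT,
            Function.update_of_ne hji]
      · simp
    have hkey : ∀ x : S i, elimF E F T i (Function.update v i x)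
        = F i (Function.update (Function.update v T t₀) i x) := by
      intro x
      rw [elimF_eq_child E F T i hTi _ t₀ (by rw [hbase]; exact h1)
            (fun t ht => by rw [hbase]; exact h0 t ht)]
      rw [Function.update_comm hiT]
    simp_rw [hkey]
    exact hsumi _
  · have hkey : ∀ x : S i, elimF E F T i (Function.update v i x)
        = F i (Function.update v i x) := by
      intro x; unfold elimF; rw [if_neg hTi]
    simp_rw [hkey]
    exact hsumi v

lemma elimF_func (E : ι → ι → Prop) (F : (i : ι) → (∀ j, S j) → ℝ) (T : ι)
    (hfuncT : ∀ v, F T v = 0 ∨ F T v = 1)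
    (hsumT : ∀ v, ∑ t : S T, F T (Function.update v T t) = 1)
    (i : ι) (hfunci : ∀ v, F i v = 0 ∨ F i v = 1) :
    ∀ v, elimF E F T i v = 0 ∨ elimF E F T i v = 1 := by
  intro v
  by_cases hTi : E T i
  · obtain ⟨t₀, h1, h0⟩ := exists_point F T hfuncT hsumT v
    rw [elimF_eq_child E F T i hTi v t₀ h1 h0]
    exact hfunci _
  · unfold elimF; rw [if_neg hTi]; exact hfunci v

lemma step_elim (E : ι → ι → Prop) (F : (i : ι) → (∀ j, S j) → ℝ) (T : ι)
    (hfuncT : ∀ v, F T v = 0 ∨ F T v = 1)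
    (hsumT : ∀ v, ∑ t : S T, F T (Function.update v T t) = 1)
    (Xvars : Set ι) (hTX : T ∉ Xvars) (xs : ∀ i, S i)
    (B : Finset ι) (hTB : T ∈ B)
    (hloc : ∀ i ∈ B, ∀ v w, (∀ j, E j i → v j = w j) → v i = w i → F i v = F i w)
    (v : ∀ j, S j) :
    ∏ i ∈ B.erase T, mutF (elimF E F T) Xvars xs i v
      = ∑ t : S T, ∏ i ∈ B, mutF F Xvars xs i (Function.update v T t) := by
  obtain ⟨t₀, h1, h0⟩ := exists_point F T hfuncT hsumT v
  rw [Finset.sum_eq_single t₀]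
  · rw [← Finset.mul_prod_erase B _ hTB]
    have hT1 : mutF F Xvars xs T (Function.update v T t₀) = 1 := by
      unfold mutF; rw [if_neg hTX]; exact h1
    rw [hT1, one_mul]
    apply Finset.prod_congr rfl
    intro i hi
    have hiT : i ≠ T := Finset.ne_of_mem_erase hi
    have hiB : i ∈ B := Finset.mem_of_mem_erase hi
    unfold mutF
    by_cases hXi : i ∈ Xvars
    · rw [if_pos hXi, if_pos hXi, Function.update_of_ne hiT]
    · rw [if_neg hXi, if_neg hXi]
      by_cases hTi : E T i
      · exact elimF_eq_child E F T i hTi v t₀ h1 h0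
      · have h2 : elimF E F T i v = F i v := by unfold elimF; rw [if_neg hTi]
        rw [h2]
        apply hloc i hiB
        · intro j hj
          have hjT : j ≠ T := fun h => hTi (h ▸ hj)
          rw [Function.update_of_ne hjT]
        · rw [Function.update_of_ne hiT]
  · intro b _ hb
    apply Finset.prod_eq_zero hTB
    unfold mutF; rw [if_neg hTX]
    simp [h0 b hb]
  · intro h; exact absurd (Finset.mem_univ t₀) h

def splitEquiv (T : ι) : ((∀ j, S j) × S T) ≃ ((∀ j, S j) × S T) where
  toFun p := (Function.update p.1 T p.2, p.1 T)
  invFun p := (Function.update p.1 T p.2, p.1 T)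
  left_inv p := by simp [Function.update_idem, Function.update_eq_self]
  right_inv p := by simp [Function.update_idem, Function.update_eq_self]

@[simp] lemma splitEquiv_apply (T : ι) (p : ((∀ j, S j) × S T)) :
    splitEquiv (S := S) T p = (Function.update p.1 T p.2, p.1 T) := rfl

lemma sum_split (T : ι) (a : S T) (h : (∀ j, S j) → ℝ) :
    ∑ u : ∀ j, S j, (if u T = a then ∑ t : S T, h (Function.update u T t) else 0)
      = ∑ u : ∀ j, S j, h u := by
  let e := splitEquiv (S := S) T
  have step2 : ∀ p : ((∀ j, S j) × S T),
      (if (e p).1 T = a then h (Function.update (e p).1 T (e p).2) else 0)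
        = if p.2 = a then h p.1 else 0 := by
    intro p
    simp [e, Function.update_idem, Function.update_eq_self]
  calc ∑ u : ∀ j, S j, (if u T = a then ∑ t : S T, h (Function.update u T t) else 0)
      = ∑ u : ∀ j, S j, ∑ t : S T, (if u T = a then h (Function.update u T t) else 0) := by
        apply Finset.sum_congr rfl
        intro u _
        split_ifs <;> simp
    _ = ∑ p : ((∀ j, S j) × S T), (if p.1 T = a then h (Function.update p.1 T p.2) else 0) := by
        rw [Fintype.sum_prod_type]
    _ = ∑ p : ((∀ j, S j) × S T),
          (if (e p).1 T = a then h (Function.update (e p).1 T (e p).2) else 0) :=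
        (Equiv.sum_comp e (fun p : ((∀ j, S j) × S T) =>
          if p.1 T = a then h (Function.update p.1 T p.2) else 0)).symm
    _ = ∑ p : ((∀ j, S j) × S T), (if p.2 = a then h p.1 else 0) :=
        Finset.sum_congr rfl (fun p _ => step2 p)
    _ = ∑ u : ∀ j, S j, ∑ t : S T, (if t = a then h u else 0) := by
        rw [Fintype.sum_prod_type]
    _ = ∑ u : ∀ j, S j, h u := by simp


lemma main_aux (Xvars : Set ι) (xs : ∀ i, S i) (l : List ι) (hl : l.Nodup)
    (E : ι → ι → Prop) (F : (i : ι) → (∀ j, S j) → ℝ) (A : Finset ι)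
    (hA : ∀ i ∈ l, i ∉ A)
    (hX : ∀ x ∈ Xvars, x ∉ l)
    (hacyc : ∀ i, ¬ Relation.TransGen E i i)
    (hloc : ∀ i ∈ A ∪ l.toFinset, ∀ v w, (∀ j, E j i → v j = w j) → v i = w i → F i v = F i w)
    (hsum : ∀ i ∈ l, ∀ v, ∑ x : S i, F i (Function.update v i x) = 1)
    (hfunc : ∀ i ∈ l, ∀ v, F i v = 0 ∨ F i v = 1)
    (v : ∀ j, S j) :
    (∏ i ∈ A, mutF (elimNetList (E, F) l).2 Xvars xs i v)
      = ∑ u : ∀ j, S j,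
          if (∀ i, i ∉ l → u i = v i) then ∏ i ∈ A ∪ l.toFinset, mutF F Xvars xs i u
          else 0 := by
  induction l generalizing E F v with
  | nil =>
    have hnet : elimNetList (E, F) ([] : List ι) = (E, F) := rfl
    rw [hnet]
    simp only [List.toFinset_nil, Finset.union_empty]
    have h2 : ∀ u : ∀ j, S j,
        (if (∀ i, i ∉ ([] : List ι) → u i = v i)
          then ∏ i ∈ A, mutF F Xvars xs i u else 0)
        = (if u = v then ∏ i ∈ A, mutF F Xvars xs i u else 0) := by
      intro u
      exact if_congr (by simp [funext_iff]) rfl rfl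
    rw [Finset.sum_congr rfl (fun u _ => h2 u), Finset.sum_ite_eq' Finset.univ v
      (fun u => ∏ i ∈ A, mutF F Xvars xs i u), if_pos (Finset.mem_univ v)]
  | cons T l' ih =>
    have hTl' : T ∉ l' := (List.nodup_cons.mp hl).1
    have hl' : l'.Nodup := (List.nodup_cons.mp hl).2
    have hTmem : T ∈ T :: l' := List.mem_cons_self
    have hTA : T ∉ A := hA T hTmem
    have hTX : T ∉ Xvars := fun h => hX T h hTmem
    have hsumT : ∀ u, ∑ t : S T, F T (Function.update u T t) = 1 := hsum T hTmem
    have hfuncT : ∀ u, F T u = 0 ∨ F T u = 1 := hfunc T hTmem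
    have hTun : T ∈ A ∪ (T :: l').toFinset := by simp
    have hlocT : ∀ v w, (∀ j, E j T → v j = w j) → v T = w T → F T v = F T w :=
      hloc T hTun
    have hBdef : A ∪ (T :: l').toFinset = insert T (A ∪ l'.toFinset) := by
      rw [List.toFinset_cons, Finset.union_insert]
    have hTnot : T ∉ A ∪ l'.toFinset := by simp [hTA, hTl']
    have hBe : (insert T (A ∪ l'.toFinset)).erase T = A ∪ l'.toFinset :=
      Finset.erase_insert hTnot
    have hacyc' : ∀ i, ¬ Relation.TransGen (elimE E T) i i := elim_acyc E T hacyc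
    have hloc' : ∀ i ∈ A ∪ l'.toFinset, ∀ v w,
        (∀ j, elimE E T j i → v j = w j) → v i = w i →
        elimF E F T i v = elimF E F T i w := by
      intro i hi
      have hiT : i ≠ T := fun h => hTnot (h ▸ hi)
      have hiB : i ∈ A ∪ (T :: l').toFinset := by
        rw [hBdef]; exact Finset.mem_insert_of_mem hi
      exact elimF_loc E F T hlocT i hiT (hloc i hiB)
    have hsum' : ∀ i ∈ l', ∀ v, ∑ x : S i, elimF E F T i (Function.update v i x) = 1 := by
      intro i hi
      have hiT : i ≠ T := fun h => hTl' (h ▸ hi)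
      have hnEiT : E T i → ¬ E i T := fun hTi hiT' =>
        hacyc T ((Relation.TransGen.single hTi).trans (Relation.TransGen.single hiT'))
      exact elimF_sum E F T hfuncT hsumT hlocT i hiT hnEiT
        (hsum i (List.mem_cons_of_mem T hi))
    have hfunc' : ∀ i ∈ l', ∀ v, elimF E F T i v = 0 ∨ elimF E F T i v = 1 := by
      intro i hi
      exact elimF_func E F T hfuncT hsumT i (hfunc i (List.mem_cons_of_mem T hi))
    have hA' : ∀ i ∈ l', i ∉ A := fun i hi => hA i (List.mem_cons_of_mem T hi)
    have hX' : ∀ x ∈ Xvars, x ∉ l' := fun x hx h => hX x hx (List.mem_cons_of_mem T h)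
    have hnet : elimNetList (E, F) (T :: l') = elimNetList (elimE E T, elimF E F T) l' := rfl
    rw [hnet, ih hl' (elimE E T) (elimF E F T) hA' hX' hacyc' hloc' hsum' hfunc' v]
    have hlocB : ∀ i ∈ insert T (A ∪ l'.toFinset), ∀ v w,
        (∀ j, E j i → v j = w j) → v i = w i → F i v = F i w := by
      intro i hi
      exact hloc i (by rw [hBdef]; exact hi)
    have hstep : ∀ u : ∀ j, S j, ∏ i ∈ A ∪ l'.toFinset, mutF (elimF E F T) Xvars xs i u
        = ∑ t : S T, ∏ i ∈ insert T (A ∪ l'.toFinset), mutF F Xvars xs i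
            (Function.update u T t) := by
      intro u
      conv_lhs => rw [← hBe]
      exact step_elim E F T hfuncT hsumT Xvars hTX xs _ (Finset.mem_insert_self _ _) hlocB u
    simp only [hstep, hBdef]
    rw [← sum_split T (v T) (fun u => if (∀ i, i ∉ T :: l' → u i = v i)
      then ∏ i ∈ insert T (A ∪ l'.toFinset), mutF F Xvars xs i u else 0)]
    apply Finset.sum_congr rfl
    intro u _
    by_cases hvT : u T = v T
    · rw [if_pos hvT]
      by_cases hP : ∀ i, i ∉ l' → u i = v i
      · rw [if_pos hP]
        apply Finset.sum_congr rfl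
        intro t _
        rw [if_pos]
        intro i hi
        have hiT : i ≠ T := fun h => hi (h ▸ hTmem)
        rw [Function.update_of_ne hiT]
        exact hP i (fun h => hi (List.mem_cons_of_mem T h))
      · rw [if_neg hP]
        symm
        apply Finset.sum_eq_zero
        intro t _
        rw [if_neg]
        intro hPc
        apply hP
        intro i hi
        by_cases hiT : i = T
        · subst hiT; exact hvT
        · have := hPc i (by simp [hiT, hi])
          rwa [Function.update_of_ne hiT] at this
    · rw [if_neg hvT, if_neg]
      intro hPc
      exact hvT (hPc T (by simp [hTl']))

/-- Let `M'` be the network obtained by functionally eliminating the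
functional variables `W` (given in some order `l`) from the Bayesian network
`M = (E, F)`. For any treatment `do(Xvars = xs)` with `Xvars` disjoint from `W`,
the interventional distribution of `M'` equals the marginal over `W` of the
interventional distribution of `M`: for every instantiation `v` of the remaining
variables, `Pr^{M'}_x(v) = ∑_{w} Pr^M_x(v, w)`. -/
theorem elimination_preserves_interventional_distribution
    (E : ι → ι → Prop) (hacyc : ∀ i, ¬ Relation.TransGen E i i)
    (F : (i : ι) → (∀ j, S j) → ℝ)
    (hloc : ∀ i v w, (∀ j, E j i → v j = w j) → v i = w i → F i v = F i w)
    (hnn : ∀ i v, 0 ≤ F i v)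
    (hsum : ∀ i v, ∑ x : S i, F i (Function.update v i x) = 1)
    (W : Finset ι) (l : List ι) (hl : l.Nodup) (hlW : ∀ i, i ∈ l ↔ i ∈ W)
    (hWfunc : ∀ w ∈ W, ∀ v, F w v = 0 ∨ F w v = 1)
    (Xvars : Set ι) (hXW : ∀ x ∈ Xvars, x ∉ W)
    (xs : ∀ i, S i) :
    ∀ v : ∀ j, S j,
      (∏ i ∈ Finset.univ \ W, mutF (elimNetList (E, F) l).2 Xvars xs i v)
        = ∑ u : ∀ j, S j,
            if (∀ i, i ∉ W → u i = v i) then ∏ i, mutF F Xvars xs i u else 0 := by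
  intro v
  have hWl : l.toFinset = W := by
    ext i; simp [hlW i]
  have key := main_aux Xvars xs l hl E F (Finset.univ \ W)
    (fun i hi hmem => (Finset.mem_sdiff.mp hmem).2 ((hlW i).mp hi))
    (fun x hx hmem => hXW x hx ((hlW x).mp hmem))
    hacyc
    (fun i _ => hloc i)
    (fun i _ => hsum i)
    (fun i hi => hWfunc i ((hlW i).mp hi))
    v
  rw [key]
  have hset : Finset.univ \ W ∪ l.toFinset = Finset.univ := by
    rw [hWl]; exact Finset.sdiff_union_of_subset (Finset.subset_univ W)
  rw [hset]
  apply Finset.sum_congr rfl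
  intro u _
  exact if_congr (by simp only [hlW]) rfl rfl


end
end
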